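/- arXiv:1711.10805 — 2 statements merged into one kernel-verified Lean document; each statement's English description precedes it below -/
import Mathlib

section
/- Let σ^M be the minimum G-strongly positive script and a a stable configuration. Then a is superstable if and only if for every script σ with 0 ≺ σ ⪯ σ^M (σ ∈ N^n nonzero, σ ⪯ σ^M componentwise), a − σΔ has a negative component; equivalently, a − σΔ is not stable for all such σ. -/
/-- A finite directed multigraph without loops on `Fin (n+1)` with global sink `Fin.last n`. -/
structure SinkDigraph (n : ℕ) where
  e : Fin (n + 1) → Fin (n + 1) → ℕ
  loopless : ∀ i, e i i = 0
  sink_no_out : ∀ j, e (Fin.last n) j = 0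
  path_to_sink : ∀ i, Relation.ReflTransGen (fun u v => 0 < e u v) i (Fin.last n)

namespace SinkDigraph

variable {n : ℕ}

/-- Out-degree of a vertex. -/
def outDeg (G : SinkDigraph n) (i : Fin (n + 1)) : ℕ := ∑ j, G.e i j

/-- The (full) Laplacian matrix over ℤ. -/
def lap (G : SinkDigraph n) : Matrix (Fin (n + 1)) (Fin (n + 1)) ℤ :=
  Matrix.of fun i j => if i = j then (G.outDeg i : ℤ) else -(G.e i j : ℤ)

/-- The reduced Laplacian (rows/columns of the sink removed). -/
def redLap (G : SinkDigraph n) : Matrix (Fin n) (Fin n) ℤ :=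
  Matrix.of fun i j => G.lap i.castSucc j.castSucc

/-- The reduced Laplacian over ℚ. -/
def redLapQ (G : SinkDigraph n) : Matrix (Fin n) (Fin n) ℚ :=
  (G.redLap).map (Int.cast : ℤ → ℚ)

/-- A ℕ-script viewed as integer vector. -/
def natScript (σ : Fin n → ℕ) : Fin n → ℤ := fun i => (σ i : ℤ)

/-- Result of firing vertex `i` in configuration `a`. -/
def fire (G : SinkDigraph n) (a : Fin n → ℤ) (i : Fin n) : Fin n → ℤ :=
  fun j => a j - G.redLap i j

/-- Result of firing a sequence of vertices. -/
def applySeq (G : SinkDigraph n) : (Fin n → ℤ) → List (Fin n) → (Fin n → ℤ)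
  | a, [] => a
  | a, i :: s => G.applySeq (G.fire a i) s

/-- A firing sequence is legal from `a` if every fired vertex is active when fired. -/
def Legal (G : SinkDigraph n) : (Fin n → ℤ) → List (Fin n) → Prop
  | _, [] => True
  | a, i :: s => G.redLap i i ≤ a i ∧ G.Legal (G.fire a i) s

/-- The firing script of a firing sequence. -/
def script (s : List (Fin n)) : Fin n → ℤ := fun i => (s.count i : ℤ)

/-- A configuration is stable if it is non-negative and no vertex is active. -/
def IsStable (G : SinkDigraph n) (a : Fin n → ℤ) : Prop :=
  ∀ i, 0 ≤ a i ∧ a i < G.redLap i i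

/-- `b` is the stabilization of `a`. -/
def Stabilizes (G : SinkDigraph n) (a b : Fin n → ℤ) : Prop :=
  ∃ s : List (Fin n), G.Legal a s ∧ G.applySeq a s = b ∧ G.IsStable b

/-- The maximal stable configuration `c_max`. -/
def cmax (G : SinkDigraph n) : Fin n → ℤ := fun i => (G.outDeg i.castSucc : ℤ) - 1

/-- A stable configuration is critical if it is the stabilization of `c_max + c`
for some non-negative `c`. -/
def IsCritical (G : SinkDigraph n) (a : Fin n → ℤ) : Prop :=
  ∃ c : Fin n → ℤ, 0 ≤ c ∧ G.Stabilizes (G.cmax + c) a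

/-- `σΔ ≻ 0`, i.e. `σΔ` is non-negative and non-zero. -/
def GPositive (G : SinkDigraph n) (σ : Fin n → ℕ) : Prop :=
  0 ≤ Matrix.vecMul (natScript σ) G.redLap ∧ Matrix.vecMul (natScript σ) G.redLap ≠ 0

/-- Reachability along directed edges. -/
def Reach (G : SinkDigraph n) : Fin (n + 1) → Fin (n + 1) → Prop :=
  Relation.ReflTransGen (fun u v => 0 < G.e u v)

/-- A source component: a strongly connected component with no in-going edge from outside. -/
def IsSourceComponent (G : SinkDigraph n) (S : Set (Fin (n + 1))) : Prop :=
  (∃ i, S = {j | G.Reach i j ∧ G.Reach j i}) ∧ ∀ j ∉ S, ∀ k ∈ S, G.e j k = 0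

/-- A `G`-strongly positive script. -/
def GStronglyPositive (G : SinkDigraph n) (σ : Fin n → ℕ) : Prop :=
  G.GPositive σ ∧ ∀ S : Set (Fin (n + 1)), G.IsSourceComponent S →
    ∃ i : Fin n, i.castSucc ∈ S ∧ Matrix.vecMul (natScript σ) G.redLap i ≠ 0

/-- Linear equivalence of configurations. -/
def Equiv (G : SinkDigraph n) (a b : Fin n → ℤ) : Prop :=
  ∃ σ : Fin n → ℤ, b - a = Matrix.vecMul σ G.redLap

/-- The weight of a configuration. -/
def weight (a : Fin n → ℤ) : ℤ := ∑ i, a i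

/-- The energy (CFG) order: compare energy vectors `aΔ⁻¹` componentwise over ℚ. -/
def cfgLE (G : SinkDigraph n) (a b : Fin n → ℤ) : Prop :=
  Matrix.vecMul (fun i => (a i : ℚ)) (G.redLapQ)⁻¹ ≤
    Matrix.vecMul (fun i => (b i : ℚ)) (G.redLapQ)⁻¹

/-- A non-negative configuration is superstable if reverse-firing any nonzero ℕ-script
produces a negative component. -/
def IsSuperstable (G : SinkDigraph n) (a : Fin n → ℤ) : Prop :=
  0 ≤ a ∧ ∀ σ : Fin n → ℕ, σ ≠ 0 →
    ∃ i, a i - Matrix.vecMul (natScript σ) G.redLap i < 0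

end SinkDigraph

/-! For `μ` with `μΔ ⪰ 0`, truncated subtraction preserves `a - σΔ ⪰ 0`: where `σ ≥ μ`, replacing
`σ - μ` by `σ ∸ μ` only adds nonpositive off-diagonal terms of `Δ`, and elsewhere the coefficient
of `σ ∸ μ` vanishes. A strongly positive `σᴹ` is positive everywhere (the zeros of a script with
`σΔ ⪰ 0` are closed under predecessors, so they would contain a source component), so reducing
by `σᴹ` pushes any witness of non-superstability below `σᴹ`. For the stability test, fire active
vertices of `a - σΔ` upwards from `σ ≤ σᴹ`: a vertex already at its `σᴹ`-bound cannot be active,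
since reducing by `σᴹ` would leave it active in the stable `a`. -/

namespace SinkDigraph

open Matrix Finset

variable {n : ℕ} (G : SinkDigraph n)

lemma natScript_nonneg (σ : Fin n → ℕ) : 0 ≤ natScript σ := fun _ => Nat.cast_nonneg _

lemma natScript_add (σ τ : Fin n → ℕ) : natScript (σ + τ) = natScript σ + natScript τ := by
  ext i; simp [natScript]

lemma natScript_single (j : Fin n) : natScript (Pi.single j 1) = Pi.single j 1 := by
  ext i; by_cases h : i = j <;> simp [natScript, h]

lemma redLap_apply_of_ne {i j : Fin n} (h : i ≠ j) :
    G.redLap i j = -(G.e i.castSucc j.castSucc : ℤ) := by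
  simp [redLap, lap, h]

lemma redLap_nonpos_of_ne {i j : Fin n} (h : i ≠ j) : G.redLap i j ≤ 0 := by
  simp [G.redLap_apply_of_ne h]

lemma vecMul_redLap_apply_of_eq_zero {d : Fin n → ℤ} {j : Fin n} (hj : d j = 0) :
    vecMul d G.redLap j = -∑ i, d i * G.e i.castSucc j.castSucc := by
  simp only [vecMul, dotProduct, ← sum_neg_distrib]
  refine sum_congr rfl fun i _ => ?_
  rcases eq_or_ne i j with rfl | hij
  · simp [hj]
  · rw [G.redLap_apply_of_ne hij, mul_neg]

lemma vecMul_redLap_apply_nonpos {d : Fin n → ℤ} (hd : 0 ≤ d) {j : Fin n} (hj : d j = 0) :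
    vecMul d G.redLap j ≤ 0 := by
  rw [G.vecMul_redLap_apply_of_eq_zero hj, neg_nonpos]
  exact sum_nonneg fun i _ => mul_nonneg (hd i) (Nat.cast_nonneg _)

lemma e_eq_zero_of_vecMul_redLap_nonneg {d : Fin n → ℤ} (hd : 0 ≤ d) {i j : Fin n}
    (hj : d j = 0) (hdj : 0 ≤ vecMul d G.redLap j) (hi : d i ≠ 0) :
    G.e i.castSucc j.castSucc = 0 := by
  have hterms : ∀ k ∈ univ, 0 ≤ d k * G.e k.castSucc j.castSucc :=
    fun k _ => mul_nonneg (hd k) (Nat.cast_nonneg _)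
  have hsum : ∑ k, d k * G.e k.castSucc j.castSucc = 0 := by
    rw [G.vecMul_redLap_apply_of_eq_zero hj] at hdj
    exact le_antisymm (by linarith) (sum_nonneg hterms)
  have := (sum_eq_zero_iff_of_nonneg hterms).1 hsum i (mem_univ i)
  exact_mod_cast (mul_eq_zero.1 this).resolve_left hi

lemma exists_castSucc_eq_of_reach {d : Fin n → ℤ} (hd : 0 ≤ d) (hdΔ : 0 ≤ vecMul d G.redLap)
    {j : Fin n} (hj : d j = 0) {v : Fin (n + 1)} (hv : G.Reach v j.castSucc) :
    ∃ k, k.castSucc = v ∧ d k = 0 := by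
  induction hv using Relation.ReflTransGen.head_induction_on with
  | refl => exact ⟨j, rfl, hj⟩
  | @head v w hvw _ ih =>
    obtain ⟨k, rfl, hk⟩ := ih
    have hv : v ≠ Fin.last n := by rintro rfl; simp [G.sink_no_out] at hvw
    refine ⟨v.castPred hv, Fin.castSucc_castPred v hv, ?_⟩
    by_contra hne
    have := G.e_eq_zero_of_vecMul_redLap_nonneg hd hk (hdΔ k) hne
    rw [Fin.castSucc_castPred] at this
    omega

/-- A vertex `v` reaching `u` with the fewest predecessors spans a source component. -/
lemma exists_reach_isSourceComponent (u : Fin (n + 1)) :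
    ∃ v, G.Reach v u ∧ G.IsSourceComponent {j | G.Reach v j ∧ G.Reach j v} := by
  classical
  let pred : Fin (n + 1) → Finset (Fin (n + 1)) := fun v => {w | G.Reach w v}
  obtain ⟨v, hvu, hmin⟩ := exists_min_image {v | G.Reach v u} (fun v => #(pred v))
    ⟨u, mem_filter.2 ⟨mem_univ u, Relation.ReflTransGen.refl⟩⟩
  have hvu : G.Reach v u := (mem_filter.1 hvu).2
  refine ⟨v, hvu, ⟨v, rfl⟩, fun j hj k hk => ?_⟩
  by_contra hjk
  have hjv : G.Reach j v := Relation.ReflTransGen.head (Nat.pos_of_ne_zero hjk) hk.2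
  have hpred : pred j = pred v := by
    refine eq_of_subset_of_card_le (fun w hw => ?_) (hmin j ?_)
    · simp only [pred, mem_filter, mem_univ, true_and] at hw ⊢
      exact hw.trans hjv
    · exact mem_filter.2 ⟨mem_univ j, hjv.trans hvu⟩
  have hvj : v ∈ pred j := hpred ▸ mem_filter.2 ⟨mem_univ v, Relation.ReflTransGen.refl⟩
  exact hj ⟨(mem_filter.1 hvj).2, hjv⟩

variable {G} in
lemma GStronglyPositive.pos {σ : Fin n → ℕ} (h : G.GStronglyPositive σ) (j : Fin n) :
    0 < σ j := by
  by_contra! hj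
  obtain ⟨v, hvj, hsrc⟩ := G.exists_reach_isSourceComponent j.castSucc
  obtain ⟨i, hiS, hi⟩ := h.2 _ hsrc
  obtain ⟨k, hk, hk0⟩ := G.exists_castSucc_eq_of_reach (natScript_nonneg σ) h.1.1
    (by simpa [natScript] using hj) (hiS.2.trans hvj)
  rw [Fin.castSucc_injective n hk] at hk0
  exact hi (le_antisymm (G.vecMul_redLap_apply_nonpos (natScript_nonneg σ) hk0) (h.1.1 i))

lemma sub_vecMul_natScript_tsub_nonneg {a : Fin n → ℤ} (ha : 0 ≤ a) {σ μ : Fin n → ℕ}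
    (hμ : 0 ≤ vecMul (natScript μ) G.redLap) (hσ : 0 ≤ a - vecMul (natScript σ) G.redLap) :
    0 ≤ a - vecMul (natScript (σ - μ)) G.redLap := by
  intro j
  by_cases hj : μ j ≤ σ j
  · -- `σ - μ` exceeds the integer difference only away from `j`, where `Δ` is nonpositive
    set d := natScript (σ - μ) - (natScript σ - natScript μ) with hd_def
    have hd : 0 ≤ d := fun i => by simp [hd_def, natScript]; omega
    have hdj : d j = 0 := by simp [hd_def, natScript]; omega
    have hsplit : natScript (σ - μ) = natScript σ - natScript μ + d := by
      rw [hd_def]; abel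
    have hdΔ := G.vecMul_redLap_apply_nonpos hd hdj
    have h1 := hσ j
    have h2 := hμ j
    simp only [hsplit, add_vecMul, sub_vecMul, Pi.sub_apply, Pi.add_apply, Pi.zero_apply]
      at h1 h2 ⊢
    linarith
  · have h0 : natScript (σ - μ) j = 0 := by simp [natScript]; omega
    have := G.vecMul_redLap_apply_nonpos (natScript_nonneg _) h0
    simpa using (ha j).trans (le_sub_self_iff _ |>.2 this)

lemma sub_vecMul_natScript_add_single (a : Fin n → ℤ) (σ : Fin n → ℕ) (j : Fin n) :
    a - vecMul (natScript (σ + Pi.single j 1)) G.redLap =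
      G.fire (a - vecMul (natScript σ) G.redLap) j := by
  ext k
  simp [fire, natScript_add, natScript_single, add_vecMul, sub_sub]

lemma fire_nonneg {c : Fin n → ℤ} (hc : 0 ≤ c) {j : Fin n} (hj : G.redLap j j ≤ c j) :
    0 ≤ G.fire c j := by
  intro k
  rcases eq_or_ne j k with rfl | hjk
  · simpa [fire] using hj
  · simpa [fire] using (hc k).trans (le_sub_self_iff _ |>.2 (G.redLap_nonpos_of_ne hjk))

lemma exists_le_of_sub_vecMul_nonneg {a : Fin n → ℤ} (ha : 0 ≤ a) {μ : Fin n → ℕ}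
    (hμpos : ∀ i, 0 < μ i) (hμ : 0 ≤ vecMul (natScript μ) G.redLap) (σ : Fin n → ℕ)
    (hσ0 : σ ≠ 0) (hσ : 0 ≤ a - vecMul (natScript σ) G.redLap) :
    ∃ τ, τ ≠ 0 ∧ τ ≤ μ ∧ 0 ≤ a - vecMul (natScript τ) G.redLap := by
  induction σ using WellFoundedLT.induction with
  | _ σ ih =>
    by_cases hσμ : σ ≤ μ
    · exact ⟨σ, hσ0, hσμ, hσ⟩
    have hlt : σ - μ < σ := by
      refine lt_of_le_of_ne tsub_le_self fun h => hσ0 (funext fun i => ?_)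
      have hi := congrFun h i
      have := hμpos i
      simp only [Pi.sub_apply, Pi.zero_apply] at hi ⊢
      omega
    exact ih _ hlt (fun h => hσμ (tsub_eq_zero_iff_le.1 h))
      (G.sub_vecMul_natScript_tsub_nonneg ha hμ hσ)

lemma exists_isStable_sub_vecMul {a : Fin n → ℤ} (ha : G.IsStable a) {μ : Fin n → ℕ}
    (hμ : 0 ≤ vecMul (natScript μ) G.redLap) {σ : Fin n → ℕ} (hσμ : σ ≤ μ)
    (hσ : 0 ≤ a - vecMul (natScript σ) G.redLap) :
    ∃ τ, σ ≤ τ ∧ τ ≤ μ ∧ G.IsStable (a - vecMul (natScript τ) G.redLap) := by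
  have ha0 : 0 ≤ a := fun i => (ha i).1
  have hfin : {τ | τ ≤ μ ∧ 0 ≤ a - vecMul (natScript τ) G.redLap}.Finite :=
    (Set.finite_Iic μ).subset fun _ h => h.1
  obtain ⟨τ, hστ, ⟨hτμ, hτ⟩, hmax⟩ := hfin.exists_le_maximal ⟨hσμ, hσ⟩
  refine ⟨τ, hστ, hτμ, fun j => ⟨hτ j, ?_⟩⟩
  by_contra! hj
  have hfire : 0 ≤ a - vecMul (natScript (τ + Pi.single j 1)) G.redLap := by
    rw [sub_vecMul_natScript_add_single]
    exact G.fire_nonneg hτ hj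
  rcases (hτμ j).lt_or_eq with hlt | heq
  · have hle : τ + Pi.single j 1 ≤ μ := by
      intro i
      by_cases hij : i = j
      · subst hij; simpa using hlt
      · simpa [hij] using hτμ i
    have := hmax ⟨hle, hfire⟩ le_self_add j
    simp at this
  · -- here `(τ + eⱼ) - μ = eⱼ`, so `j` would already be active in `a`
    have hsub : τ + Pi.single j 1 - μ = Pi.single j 1 := by
      ext i
      by_cases hij : i = j
      · subst hij; simp [heq]
      · simp [hij, Nat.sub_eq_zero_of_le (hτμ i)]
    have := G.sub_vecMul_natScript_tsub_nonneg ha0 hμ hfire j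
    rw [hsub, natScript_single, single_one_vecMul] at this
    simp only [Pi.sub_apply, Pi.zero_apply, row_apply, sub_nonneg] at this
    exact (ha j).2.not_ge this

lemma isSuperstable_iff_forall_le {a : Fin n → ℤ} (ha : 0 ≤ a) {μ : Fin n → ℕ}
    (hμ : G.GStronglyPositive μ) :
    G.IsSuperstable a ↔ ∀ σ : Fin n → ℕ, σ ≠ 0 → σ ≤ μ →
      ∃ i, a i - vecMul (natScript σ) G.redLap i < 0 := by
  refine ⟨fun h σ hσ _ => h.2 σ hσ, fun h => ⟨ha, fun σ hσ => ?_⟩⟩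
  by_contra! hσa
  obtain ⟨τ, hτ0, hτμ, hτ⟩ := G.exists_le_of_sub_vecMul_nonneg ha hμ.pos hμ.1.1 σ hσ hσa
  obtain ⟨i, hi⟩ := h τ hτ0 hτμ
  exact (hτ i).not_gt hi

end SinkDigraph

open SinkDigraph Matrix

theorem superstable_test_below_min_script_general (n : ℕ) (G : SinkDigraph n)
    (σM : Fin n → ℕ) (hσM : G.GStronglyPositive σM)
    (a : Fin n → ℤ) (ha : G.IsStable a) :
    (G.IsSuperstable a ↔ ∀ σ : Fin n → ℕ, σ ≠ 0 → σ ≤ σM →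
        ∃ i, a i - Matrix.vecMul (natScript σ) G.redLap i < 0) ∧
    (G.IsSuperstable a ↔ ∀ σ : Fin n → ℕ, σ ≠ 0 → σ ≤ σM →
        ¬ G.IsStable (a - Matrix.vecMul (natScript σ) G.redLap)) := by
  have ha0 : 0 ≤ a := fun i => (ha i).1
  have h₁ := G.isSuperstable_iff_forall_le ha0 hσM
  refine ⟨h₁, h₁.trans ⟨fun H σ hσ0 hσ hst => ?_, fun H σ hσ0 hσ => ?_⟩⟩
  · obtain ⟨i, hi⟩ := H σ hσ0 hσ
    exact (hst i).1.not_gt hi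
  · by_contra! hσa
    obtain ⟨τ, hστ, hτσM, hτ⟩ := G.exists_isStable_sub_vecMul ha hσM.1.1 hσ hσa
    exact H τ (fun h => hσ0 (funext fun i => by simpa [h] using hστ i)) hτσM hτ

theorem superstable_test_below_min_script (n : ℕ) (G : SinkDigraph n)
    (σM : Fin n → ℕ) (hσM : G.GStronglyPositive σM)
    (hmin : ∀ σ : Fin n → ℕ, G.GStronglyPositive σ → σM ≤ σ)
    (a : Fin n → ℤ) (ha : G.IsStable a) :
    (G.IsSuperstable a ↔ ∀ σ : Fin n → ℕ, σ ≠ 0 → σ ≤ σM →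
        ∃ i, a i - Matrix.vecMul (natScript σ) G.redLap i < 0) ∧
    (G.IsSuperstable a ↔ ∀ σ : Fin n → ℕ, σ ≠ 0 → σ ≤ σM →
        ¬ G.IsStable (a - Matrix.vecMul (natScript σ) G.redLap)) :=
  superstable_test_below_min_script_general n G σM hσM a ha
end

section
/- Among all non-negative configurations in a given linear equivalence class, the superstable configuration is the unique smallest element with respect to the order ⪯_CFG defined by a ⪯_CFG b iff aΔ⁻¹ ⪯ bΔ⁻¹ componentwise. -/
open SinkDigraph Matrix

namespace SuperstableAux

open SinkDigraph Matrix Finset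

variable {n : ℕ}

lemma vecMul_apply {R : Type*} [NonUnitalNonAssocSemiring R] (v : Fin n → R)
    (M : Matrix (Fin n) (Fin n) R) (j : Fin n) :
    Matrix.vecMul v M j = ∑ i, v i * M i j := by
  simp [Matrix.vecMul, dotProduct]

lemma redLap_offdiag (G : SinkDigraph n) {i j : Fin n} (h : i ≠ j) :
    G.redLap i j = -(G.e i.castSucc j.castSucc : ℤ) := by
  have : i.castSucc ≠ j.castSucc := by simpa [Fin.castSucc_inj] using h
  simp [SinkDigraph.redLap, SinkDigraph.lap, Fin.castSucc_inj, h]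

lemma redLap_offdiag_nonpos (G : SinkDigraph n) {i j : Fin n} (h : i ≠ j) :
    G.redLap i j ≤ 0 := by
  rw [redLap_offdiag G h]
  simp

lemma plus_part (G : SinkDigraph n) (c σ : Fin n → ℤ)
    (hc : 0 ≤ c) (h : 0 ≤ c - Matrix.vecMul σ G.redLap) :
    0 ≤ c - Matrix.vecMul (fun i => max (σ i) 0) G.redLap := by
  intro i
  have hci : (0:ℤ) ≤ c i := hc i
  have hi := h i
  simp only [Pi.sub_apply, Pi.zero_apply, vecMul_apply] at hi ⊢
  rcases le_or_gt (σ i) 0 with hs | hs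
  · have hsum : ∑ j, max (σ j) 0 * G.redLap j i ≤ 0 := by
      apply Finset.sum_nonpos
      intro j _
      rcases eq_or_ne j i with rfl | hj
      · simp [max_eq_right hs]
      · exact mul_nonpos_of_nonneg_of_nonpos (le_max_right _ _)
          (redLap_offdiag_nonpos G hj)
    linarith
  · have hsum : ∑ j, max (σ j) 0 * G.redLap j i ≤ ∑ j, σ j * G.redLap j i := by
      apply Finset.sum_le_sum
      intro j _
      rcases eq_or_ne j i with rfl | hj
      · rw [max_eq_left hs.le]
      · exact mul_le_mul_of_nonpos_right (le_max_left _ _)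
          (redLap_offdiag_nonpos G hj)
    linarith

lemma script_nonneg (G : SinkDigraph n) (a b : Fin n → ℤ) (ha : G.IsSuperstable a)
    (hb : 0 ≤ b) (σ : Fin n → ℤ) (hσ : b - a = Matrix.vecMul σ G.redLap) :
    0 ≤ σ := by
  have h1 : 0 ≤ b - Matrix.vecMul σ G.redLap := by
    rw [← hσ, sub_sub_cancel]; exact ha.1
  have hplus := plus_part G b σ hb h1
  set τ : Fin n → ℕ := fun i => (-σ i).toNat with hτ
  have hnt : natScript τ = fun i => max (-σ i) 0 := by
    funext i; simp [natScript, hτ, Int.toNat_eq_max]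
  have hdecomp : (fun i => max (σ i) 0) = σ + natScript τ := by
    funext i; simp only [Pi.add_apply, hnt]; omega
  have key : 0 ≤ a - Matrix.vecMul (natScript τ) G.redLap := by
    have haeq : a = b - Matrix.vecMul σ G.redLap := by
      rw [← hσ, sub_sub_cancel]
    have hveq : Matrix.vecMul (fun i => max (σ i) 0) G.redLap
        = Matrix.vecMul σ G.redLap + Matrix.vecMul (natScript τ) G.redLap := by
      rw [hdecomp, Matrix.add_vecMul]
    have heq : a - Matrix.vecMul (natScript τ) G.redLap
        = b - Matrix.vecMul (fun i => max (σ i) 0) G.redLap := by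
      rw [haeq, hveq]; abel
    rw [heq]; exact hplus
  have hτ0 : τ = 0 := by
    by_contra hne
    obtain ⟨i, hi⟩ := ha.2 τ hne
    have := key i
    simp only [Pi.sub_apply, Pi.zero_apply] at this
    linarith
  intro i
  have h2 : τ i = 0 := congrFun hτ0 i
  simp only [hτ, Int.toNat_eq_zero] at h2
  show (0:ℤ) ≤ σ i
  omega

lemma row_eq (G : SinkDigraph n) (x : Fin n → ℚ) (hx : G.redLapQ.mulVec x = 0) (i : Fin n) :
    ∑ v, (G.lap i.castSucc v : ℚ) * (Fin.snoc x 0 : Fin (n+1) → ℚ) v = 0 := by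
  rw [Fin.sum_univ_castSucc]
  simp only [Fin.snoc_castSucc, Fin.snoc_last, mul_zero, add_zero]
  have := congrFun hx i
  simpa [Matrix.mulVec, dotProduct, SinkDigraph.redLapQ, SinkDigraph.redLap,
    Matrix.map_apply] using this

lemma row_sum (G : SinkDigraph n) (i : Fin n) :
    ∑ v, (G.lap i.castSucc v : ℚ) = 0 := by
  have h0 : (∑ v, (G.e i.castSucc v : ℚ)) = (G.outDeg i.castSucc : ℚ) := by
    simp [SinkDigraph.outDeg]
  calc ∑ v, (G.lap i.castSucc v : ℚ)
      = ∑ v, ((if i.castSucc = v then (G.outDeg i.castSucc + G.e i.castSucc v : ℚ) else 0)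
          - (G.e i.castSucc v : ℚ)) := by
        apply Finset.sum_congr rfl
        intro v _
        by_cases h : i.castSucc = v
        · subst h; simp [SinkDigraph.lap, G.loopless]
        · simp [SinkDigraph.lap, h]
    _ = 0 := by
        rw [Finset.sum_sub_distrib, Finset.sum_ite_eq]
        simp [G.loopless, h0]

lemma row_slack (G : SinkDigraph n) (i : Fin n) (M : ℚ) (y : Fin (n+1) → ℚ)
    (hrow : ∑ v, (G.lap i.castSucc v : ℚ) * y v = 0) (hyi : y i.castSucc = M) :
    ∑ v, (G.e i.castSucc v : ℚ) * (M - y v) = 0 := by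
  have key : ∑ v, (G.lap i.castSucc v : ℚ) * (M - y v) = 0 := by
    have : ∑ v, (G.lap i.castSucc v : ℚ) * (M - y v)
        = M * (∑ v, (G.lap i.castSucc v : ℚ)) - ∑ v, (G.lap i.castSucc v : ℚ) * y v := by
      rw [Finset.mul_sum, ← Finset.sum_sub_distrib]
      apply Finset.sum_congr rfl
      intro v _
      ring
    rw [this, row_sum, hrow]
    ring
  have decomp : ∑ v, (G.lap i.castSucc v : ℚ) * (M - y v)
      = (∑ v, (if i.castSucc = v then ((G.outDeg i.castSucc + G.e i.castSucc v : ℚ)) * (M - y v) else 0))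
        - ∑ v, (G.e i.castSucc v : ℚ) * (M - y v) := by
    rw [← Finset.sum_sub_distrib]
    apply Finset.sum_congr rfl
    intro v _
    by_cases h : i.castSucc = v
    · subst h; simp [SinkDigraph.lap, G.loopless]
    · simp [SinkDigraph.lap, h]
  rw [decomp, Finset.sum_ite_eq] at key
  simp [G.loopless, hyi] at key
  linarith

lemma kernel_nonpos (G : SinkDigraph n) (x : Fin n → ℚ)
    (hx : G.redLapQ.mulVec x = 0) : ∀ i, x i ≤ 0 := by
  set y : Fin (n+1) → ℚ := Fin.snoc x 0 with hy
  obtain ⟨u, -, hu⟩ := Finset.exists_max_image Finset.univ y ⟨Fin.last n, Finset.mem_univ _⟩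
  set M := y u with hM
  have hub : ∀ v, y v ≤ M := fun v => hu v (Finset.mem_univ _)
  rcases le_or_gt M 0 with hM0 | hM0
  · intro i
    have : y i.castSucc ≤ M := hub i.castSucc
    simpa [hy, Fin.snoc_castSucc] using this.trans hM0
  · exfalso
    have hclose : ∀ i : Fin n, y i.castSucc = M → ∀ v, 0 < G.e i.castSucc v → y v = M := by
      intro i hyi v hev
      have hslack := row_slack G i M y (row_eq G x hx i) hyi
      have hterm : ∀ w ∈ Finset.univ, (0:ℚ) ≤ (G.e i.castSucc w : ℚ) * (M - y w) := by
        intro w _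
        apply mul_nonneg (by positivity)
        linarith [hub w]
      have := (Finset.sum_eq_zero_iff_of_nonneg hterm).1 hslack v (Finset.mem_univ _)
      have hepos : (0:ℚ) < (G.e i.castSucc v : ℚ) := by exact_mod_cast hev
      have : M - y v = 0 := by
        rcases mul_eq_zero.1 this with h | h
        · exact absurd h (ne_of_gt hepos)
        · exact h
      linarith
    have hreach : ∀ p q : Fin (n+1), Relation.ReflTransGen (fun s t => 0 < G.e s t) p q →
        y p = M → y q = M := by
      intro p q h
      induction h with
      | refl => exact id
      | @tail b c hpb hbc ih =>
        intro hp
        have hb : y b = M := ih hp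
        have hbne : b ≠ Fin.last n := by
          intro hlast
          rw [hlast] at hbc
          simp [G.sink_no_out] at hbc
        obtain ⟨j, rfl⟩ : ∃ j : Fin n, j.castSucc = b := by
          rcases Fin.eq_castSucc_or_eq_last b with ⟨j, hj⟩ | hl
          · exact ⟨j, hj.symm⟩
          · exact absurd hl hbne
        exact hclose j hb c hbc
    have hlastM : y (Fin.last n) = M := hreach u (Fin.last n) (G.path_to_sink u) rfl
    rw [hy, Fin.snoc_last] at hlastM
    exact absurd hlastM.symm (ne_of_gt hM0)

lemma det_ne_zero (G : SinkDigraph n) : (G.redLapQ).det ≠ 0 := by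
  intro h
  obtain ⟨v, hv, hv0⟩ := (Matrix.exists_mulVec_eq_zero_iff).2 h
  have h1 := kernel_nonpos G v hv0
  have h2 := kernel_nonpos G (-v) (by rw [Matrix.mulVec_neg, hv0, neg_zero])
  refine hv (funext fun i => le_antisymm (h1 i) ?_)
  have h2i : -v i ≤ 0 := by simpa using h2 i
  show (0:ℚ) ≤ v i
  linarith

lemma cast_vecMul (G : SinkDigraph n) (σ : Fin n → ℤ) :
    (fun i => ((Matrix.vecMul σ G.redLap i : ℤ) : ℚ))
      = Matrix.vecMul (fun i => (σ i : ℚ)) G.redLapQ := by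
  funext j
  simp [Matrix.vecMul, dotProduct, SinkDigraph.redLapQ, Matrix.map_apply]


end SuperstableAux

theorem superstable_cfg_least (n : ℕ) (G : SinkDigraph n) (a : Fin n → ℤ)
    (ha : G.IsSuperstable a) :
    (∀ b : Fin n → ℤ, 0 ≤ b → G.Equiv a b → G.cfgLE a b) ∧
    (∀ b : Fin n → ℤ, 0 ≤ b → G.Equiv a b →
      (∀ c : Fin n → ℤ, 0 ≤ c → G.Equiv a c → G.cfgLE b c) → b = a) := by
  classical
  have hdet : IsUnit (G.redLapQ).det := isUnit_iff_ne_zero.2 (SuperstableAux.det_ne_zero G)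
  have hinv : G.redLapQ * (G.redLapQ)⁻¹ = 1 := Matrix.mul_nonsing_inv _ hdet
  have hkey : ∀ (b : Fin n → ℤ) (σ : Fin n → ℤ), b - a = Matrix.vecMul σ G.redLap →
      Matrix.vecMul (fun i => (b i : ℚ)) (G.redLapQ)⁻¹
        = Matrix.vecMul (fun i => (a i : ℚ)) (G.redLapQ)⁻¹ + fun i => (σ i : ℚ) := by
    intro b σ hσ
    have hb : (fun i => (b i : ℚ))
        = (fun i => (a i : ℚ)) + Matrix.vecMul (fun i => (σ i : ℚ)) G.redLapQ := by
      funext i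
      have h1 := congrFun hσ i
      simp only [Pi.sub_apply] at h1
      have h2 := congrFun (SuperstableAux.cast_vecMul G σ) i
      simp only [Pi.add_apply]
      rw [← h2, ← h1]
      push_cast
      ring
    rw [hb, Matrix.add_vecMul, Matrix.vecMul_vecMul, hinv, Matrix.vecMul_one]
  constructor
  · rintro b hb ⟨σ, hσ⟩
    have hσ0 := SuperstableAux.script_nonneg G a b ha hb σ hσ
    show G.cfgLE a b
    unfold SinkDigraph.cfgLE
    rw [hkey b σ hσ]
    intro i
    simp only [Pi.add_apply]
    have : (0:ℚ) ≤ (σ i : ℚ) := by exact_mod_cast hσ0 i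
    linarith
  · rintro b hb ⟨σ, hσ⟩ hleast
    have hσ0 := SuperstableAux.script_nonneg G a b ha hb σ hσ
    have haa : G.Equiv a a := ⟨0, by simp [Matrix.zero_vecMul]⟩
    have hba := hleast a ha.1 haa
    unfold SinkDigraph.cfgLE at hba
    rw [hkey b σ hσ] at hba
    have hσz : σ = 0 := by
      funext i
      have h1 := hba i
      simp only [Pi.add_apply] at h1
      have h2 : (σ i : ℚ) ≤ 0 := by linarith
      have h3 : σ i ≤ 0 := by exact_mod_cast h2
      have h4 : 0 ≤ σ i := hσ0 i
      show σ i = (0:ℤ)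
      omega
    have hba0 : b - a = 0 := by rw [hσ, hσz, Matrix.zero_vecMul]
    exact sub_eq_zero.mp hba0
end
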